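/- Let (ψ_n) be a sequence of convex functions ℝ^d → (-∞,∞], fix x ∈ ℝ^d, and let I^B(x) be the relatively open convex set of the Bass paving. Choose nonnegative representatives ψ̄_n = ψ_n + aff_n. If the real sequence (ψ̄_n(y₀)) is bounded for some y₀ ∈ I^B(x), then (ψ̄_n(y)) is bounded for every y ∈ I^B(x), and moreover (ψ̄_n) is uniformly bounded on every compact subset of I^B(x). -/

import Mathlib

open MeasureTheory Set

noncomputable section


variable {d : ℕ}

/-- The representatives of `ψ_n` that are nonnegative and take a value `< ε` at `x`:
all functions of the form `ψ_n + aff` with `aff` affine, `ψ_n + aff ≥ 0` and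
`(ψ_n + aff)(x) < ε`. -/
def reps (Ψ : ℕ → EuclideanSpace ℝ (Fin d) → ℝ) (n : ℕ) (x : EuclideanSpace ℝ (Fin d))
    (ε : ℝ) : Set (EuclideanSpace ℝ (Fin d) → ℝ) :=
  {g | ∃ (a : EuclideanSpace ℝ (Fin d)) (b : ℝ),
    (∀ y, g y = Ψ n y + (inner ℝ a y + b)) ∧ (∀ y, 0 ≤ g y) ∧ g x < ε}

/-- `I^b(x)`: the set of `y` such that
`lim_{ε↓0} sup_n sup_{ψ̄_n ∈ [ψ_n]^{x,ε}} ψ̄_n(y) < ∞`.  Since the inner supremum is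
nonincreasing as `ε ↓ 0`, finiteness of the limit is equivalent to finiteness of the
supremum for some `ε > 0`. -/
def Ib (Ψ : ℕ → EuclideanSpace ℝ (Fin d) → ℝ) (x : EuclideanSpace ℝ (Fin d)) :
    Set (EuclideanSpace ℝ (Fin d)) :=
  {y | ∃ ε > (0 : ℝ), ∃ M : ℝ, ∀ n, ∀ g ∈ reps Ψ n x ε, g y ≤ M}

/-- `I^B(x)`: the relative interior of `I^b(x)`. -/
def IB (Ψ : ℕ → EuclideanSpace ℝ (Fin d) → ℝ) (x : EuclideanSpace ℝ (Fin d)) :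
    Set (EuclideanSpace ℝ (Fin d)) :=
  intrinsicInterior ℝ (Ib Ψ x)

/-! Write `ψ̄_n = g + ℓ` with `ℓ` an affine minorant of `ψ̄_n` that almost touches it at `x`,
so that `g` is one of the representatives in the definition of `I^b(x)` and is therefore
bounded, uniformly in `n`, at every point of `I^b(x)`. The affine part `ℓ` is bounded above at
`y₀` by `ψ̄_n(y₀)`, and bounded below, since `ψ̄_n ≥ 0`, at a point `z ∈ I^b(x)` chosen beyond
`y₀` on the line from `y`; as `y₀` lies strictly between `y` and `z`, `ℓ` is bounded above
at `y`. For a compact `K ⊆ I^B(x)`, compactness puts `K` inside the convex hull of finitely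
many points of `I^b(x)`, and a convex function on such a hull is bounded by its values at
those points. -/

open Filter Topology

section Geometry

variable {E : Type*} [NormedAddCommGroup E] [NormedSpace ℝ E] {s : Set E} {x y : E}

theorem mem_nhdsWithin_affineSpan_of_mem_intrinsicInterior (hx : x ∈ intrinsicInterior ℝ s) :
    s ∈ 𝓝[affineSpan ℝ s] x := by
  obtain ⟨z, hz, rfl⟩ := mem_intrinsicInterior.1 hx
  exact mem_of_superset (mem_nhds_subtype_iff_nhdsWithin.1 (mem_interior_iff_mem_nhds.1 hz))
    (image_preimage_subset _ _)

theorem exists_lineMap_neg_mem_of_mem_intrinsicInterior (hx : x ∈ intrinsicInterior ℝ s)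
    (hy : y ∈ s) : ∃ t : ℝ, 0 < t ∧ AffineMap.lineMap x y (-t) ∈ s := by
  have hx_mem : x ∈ affineSpan ℝ s := subset_affineSpan ℝ s (intrinsicInterior_subset hx)
  have hline : Tendsto (AffineMap.lineMap x y : ℝ → E) (𝓝[<] 0) (𝓝[affineSpan ℝ s] x) := by
    refine tendsto_nhdsWithin_iff.2 ⟨?_, Eventually.of_forall fun t ↦
      AffineMap.lineMap_mem t hx_mem (subset_affineSpan ℝ s hy)⟩
    simpa using ((AffineMap.lineMap_continuous (R := ℝ)).tendsto 0).mono_left nhdsWithin_le_nhds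
  obtain ⟨t, hts, ht⟩ :=
    ((hline.eventually (mem_nhdsWithin_affineSpan_of_mem_intrinsicInterior hx)).and
      self_mem_nhdsWithin).exists
  exact ⟨-t, neg_pos.2 ht, by rwa [neg_neg]⟩

theorem exists_finite_convexHull_mem_nhdsWithin_affineSpan [FiniteDimensional ℝ E]
    (hx : x ∈ intrinsicInterior ℝ s) :
    ∃ t ⊆ s, t.Finite ∧ convexHull ℝ t ∈ 𝓝[affineSpan ℝ s] x := by
  set A := affineSpan ℝ s
  set V := A.direction
  have hxA : x ∈ A := subset_affineSpan ℝ s (intrinsicInterior_subset hx)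
  let T : V →ᵃ[ℝ] E := (AffineEquiv.vaddConst ℝ x).toAffineMap.comp V.subtype.toAffineMap
  have hT_mem : ∀ v, T v ∈ A := fun v ↦ AffineSubspace.vadd_mem_of_mem_direction v.2 hxA
  have hT_dist : ∀ v, dist (T v) x = ‖v‖ := fun v ↦ by simp [T]
  have hT_surj : ∀ y ∈ A, ∃ v, T v = y := fun y hy ↦
    ⟨⟨y -ᵥ x, AffineSubspace.vsub_mem_direction hy hxA⟩, by simp [T]⟩
  obtain ⟨r₀, hr₀, hball₀⟩ := Metric.mem_nhdsWithin_iff.1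
    (mem_nhdsWithin_affineSpan_of_mem_intrinsicInterior hx)
  obtain ⟨b, hb_int, hb_ball⟩ :=
    exists_mem_interior_convexHull_affineBasis (Metric.ball_mem_nhds (0 : V) hr₀)
  obtain ⟨r, hr, hball⟩ := Metric.mem_nhds_iff.1 (mem_interior_iff_mem_nhds.1 hb_int)
  refine ⟨T '' range b, ?_, (finite_range b).image T, ?_⟩
  · rintro _ ⟨v, hv, rfl⟩
    refine hball₀ ⟨?_, hT_mem v⟩
    simpa [hT_dist] using hb_ball (subset_convexHull ℝ _ hv)
  · rw [← AffineMap.image_convexHull]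
    refine Metric.mem_nhdsWithin_iff.2 ⟨r, hr, fun y ⟨hyr, hyA⟩ ↦ ?_⟩
    obtain ⟨v, rfl⟩ := hT_surj y hyA
    refine mem_image_of_mem T (hball ?_)
    simpa [hT_dist] using hyr

theorem IsCompact.exists_finite_subset_convexHull [FiniteDimensional ℝ E] {K : Set E}
    (hK : IsCompact K) (hKs : K ⊆ intrinsicInterior ℝ s) :
    ∃ t ⊆ s, t.Finite ∧ K ⊆ convexHull ℝ t := by
  choose! T hTs hTfin hTnhds using fun k (hk : k ∈ K) ↦
    exists_finite_convexHull_mem_nhdsWithin_affineSpan (hKs hk)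
  have hKA : K ⊆ affineSpan ℝ s :=
    hKs.trans (intrinsicInterior_subset.trans (subset_affineSpan ℝ s))
  obtain ⟨u, huK, hcover⟩ := hK.elim_nhdsWithin_subcover (fun k ↦ convexHull ℝ (T k))
    fun k hk ↦ nhdsWithin_mono k hKA (hTnhds k hk)
  refine ⟨⋃ k ∈ u, T k, iUnion₂_subset fun k hk ↦ hTs k (huK k hk),
    u.finite_toSet.biUnion fun k hk ↦ hTfin k (huK k hk), hcover.trans ?_⟩
  exact iUnion₂_subset fun k hk ↦ convexHull_mono (subset_biUnion_of_mem (u := T) hk)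

theorem IsCompact.exists_forall_le_of_subset_intrinsicInterior [FiniteDimensional ℝ E]
    {ι : Type*} {f : ι → E → ℝ} {C K : Set E} (hf : ∀ i, ConvexOn ℝ C (f i)) (hsC : s ⊆ C)
    (hs : ∀ y ∈ s, ∃ M, ∀ i, f i y ≤ M) (hK : IsCompact K) (hKs : K ⊆ intrinsicInterior ℝ s) :
    ∃ M, ∀ i, ∀ y ∈ K, f i y ≤ M := by
  obtain ⟨t, hts, htfin, hKt⟩ := hK.exists_finite_subset_convexHull hKs
  choose! B hB using hs
  obtain ⟨M, hM⟩ := (htfin.image B).bddAbove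
  refine ⟨M, fun i y hy ↦ ?_⟩
  obtain ⟨p, hpt, hyp⟩ := (hf i).exists_ge_of_mem_convexHull (hts.trans hsC) (hKt hy)
  exact hyp.trans ((hB p (hts hpt) i).trans (hM (mem_image_of_mem B hpt)))

end Geometry

section Hilbert

variable {E : Type*} [NormedAddCommGroup E] [InnerProductSpace ℝ E] [CompleteSpace E]

theorem ConvexOn.exists_inner_add_le_of_lt {f : E → ℝ} (hf : ConvexOn ℝ univ f)
    (hf_lsc : LowerSemicontinuous f) {x : E} {a : ℝ} (ha : a < f x) :
    ∃ (v : E) (c : ℝ), (∀ y, inner ℝ v y + c ≤ f y) ∧ inner ℝ v x + c = a := by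
  obtain ⟨l, c, hle, hx⟩ := hf.exists_affine_le_of_lt (𝕜 := ℝ) (mem_univ x) ha isClosed_univ
    (hf_lsc.lowerSemicontinuousOn univ)
  refine ⟨(InnerProductSpace.toDual ℝ E).symm l, c, fun y ↦ ?_, by simpa using hx⟩
  simpa using hle ⟨y, mem_univ y⟩

end Hilbert

section Representatives

variable {Ψ : ℕ → EuclideanSpace ℝ (Fin d) → ℝ} {x : EuclideanSpace ℝ (Fin d)}
  {ψbar : ℕ → EuclideanSpace ℝ (Fin d) → ℝ} {a : ℕ → EuclideanSpace ℝ (Fin d)} {b : ℕ → ℝ}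

theorem reps_mono {n : ℕ} {ε ε' : ℝ} (h : ε ≤ ε') : reps Ψ n x ε ⊆ reps Ψ n x ε' :=
  fun _ ⟨a, b, hg, hg_nonneg, hgx⟩ ↦ ⟨a, b, hg, hg_nonneg, hgx.trans_le h⟩

theorem exists_inner_add_le_sub_mem_reps {n : ℕ} (hΨ : ConvexOn ℝ univ (Ψ n))
    (hrep : ∀ y, ψbar n y = Ψ n y + (inner ℝ (a n) y + b n)) {ε : ℝ} (hε : 0 < ε) :
    ∃ (v : EuclideanSpace ℝ (Fin d)) (c : ℝ), (∀ y, inner ℝ v y + c ≤ ψbar n y) ∧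
      (fun y ↦ ψbar n y - (inner ℝ v y + c)) ∈ reps Ψ n x ε := by
  obtain ⟨v, c, hle, hx⟩ := hΨ.exists_inner_add_le_of_lt
    hΨ.locallyLipschitz.continuous.lowerSemicontinuous (x := x) (a := Ψ n x - ε / 2) (by linarith)
  refine ⟨v + a n, c + b n, fun y ↦ ?_, -v, -c, fun y ↦ ?_, fun y ↦ ?_, ?_⟩ <;>
    simp only [hrep, inner_add_left, inner_neg_left]
  · linarith [hle y]
  · ring
  · linarith [hle y]
  · linarith

theorem exists_forall_le_of_mem_Ib (hconv : ∀ n, ConvexOn ℝ univ (Ψ n))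
    (hrep : ∀ n y, ψbar n y = Ψ n y + (inner ℝ (a n) y + b n)) (hnonneg : ∀ n y, 0 ≤ ψbar n y)
    {y₀ : EuclideanSpace ℝ (Fin d)} (hy₀ : y₀ ∈ IB Ψ x) (hbdd : ∃ M, ∀ n, ψbar n y₀ ≤ M)
    {y : EuclideanSpace ℝ (Fin d)} (hy : y ∈ Ib Ψ x) :
    ∃ M, ∀ n, ψbar n y ≤ M := by
  obtain ⟨M₀, hM₀⟩ := hbdd
  obtain ⟨s, hs, hz⟩ := exists_lineMap_neg_mem_of_mem_intrinsicInterior hy₀ hy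
  set z := AffineMap.lineMap y₀ y (-s)
  obtain ⟨εy, hεy, My, hMy⟩ := hy
  obtain ⟨εz, hεz, Mz, hMz⟩ := hz
  refine ⟨My + ((1 + s) * M₀ + Mz) / s, fun n ↦ ?_⟩
  obtain ⟨v, c, hle, hg⟩ := exists_inner_add_le_sub_mem_reps (x := x) (hconv n) (hrep n)
    (lt_min hεy hεz)
  have hgy := hMy n _ (reps_mono (min_le_left _ _) hg)
  have hgz := hMz n _ (reps_mono (min_le_right _ _) hg)
  have hz_eq : inner ℝ v z + c = (1 + s) * (inner ℝ v y₀ + c) - s * (inner ℝ v y + c) := by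
    simp only [z, AffineMap.lineMap_apply, vsub_eq_sub, vadd_eq_add, inner_add_right,
      inner_smul_right, inner_sub_right]
    ring
  have hℓy : inner ℝ v y + c ≤ ((1 + s) * M₀ + Mz) / s := by
    rw [le_div_iff₀' hs]
    nlinarith [hle y₀, hM₀ n, hnonneg n z]
  linarith

end Representatives

/-- Fix nonnegative representatives `ψ̄_n = ψ_n + aff_n` of a sequence of convex
functions.  If the sequence `(ψ̄_n(y₀))_n` is bounded for some `y₀ ∈ I^B(x)`, then it is
bounded for every `y ∈ I^B(x)`, and moreover `(ψ̄_n)_n` is uniformly bounded on every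
compact subset of `I^B(x)`. -/
theorem IB_bounded_reps (Ψ : ℕ → EuclideanSpace ℝ (Fin d) → ℝ)
    (hconv : ∀ n, ConvexOn ℝ Set.univ (Ψ n))
    (x : EuclideanSpace ℝ (Fin d))
    (ψbar : ℕ → EuclideanSpace ℝ (Fin d) → ℝ)
    (a : ℕ → EuclideanSpace ℝ (Fin d)) (b : ℕ → ℝ)
    (hrep : ∀ n y, ψbar n y = Ψ n y + (inner ℝ (a n) y + b n))
    (hnonneg : ∀ n y, 0 ≤ ψbar n y)
    (y₀ : EuclideanSpace ℝ (Fin d)) (hy₀ : y₀ ∈ IB Ψ x)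
    (hbdd : ∃ M : ℝ, ∀ n, ψbar n y₀ ≤ M) :
    (∀ y ∈ IB Ψ x, ∃ M : ℝ, ∀ n, ψbar n y ≤ M) ∧
    (∀ K : Set (EuclideanSpace ℝ (Fin d)), K ⊆ IB Ψ x → IsCompact K →
      ∃ M : ℝ, ∀ n, ∀ y ∈ K, ψbar n y ≤ M) := by
  have hIb : ∀ y ∈ Ib Ψ x, ∃ M, ∀ n, ψbar n y ≤ M :=
    fun y hy ↦ exists_forall_le_of_mem_Ib hconv hrep hnonneg hy₀ hbdd hy
  have hψbar : ∀ n, ConvexOn ℝ univ (ψbar n) := fun n ↦ by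
    rw [show ψbar n = Ψ n + fun y ↦ inner ℝ (a n) y + b n from funext (hrep n)]
    exact (hconv n).add (((innerₛₗ ℝ (a n)).convexOn convex_univ).add_const (b n))
  exact ⟨fun y hy ↦ hIb y (intrinsicInterior_subset hy), fun K hKIB hK ↦
    hK.exists_forall_le_of_subset_intrinsicInterior hψbar (subset_univ _) hIb hKIB⟩
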